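/- Fix real numbers c₁, c₂, c₃ with (c₁, c₂) ≠ (0, 0), and fix m₁ ∈ ℤ. Let E ⊆ ℝ² be the set of pairs (α₁, α₂) for which there exist x₁, y₁ ∈ ℝ, a real t > 0, and integers m₂, n₂, q₂ such that c₁·x₁ + c₂·y₁ = c₃, m₁ + t = m₂, and c₁·(x₁ + t·α₁ − n₂) + c₂·(y₁ + t·α₂ − q₂) = c₃. Then E has two-dimensional Lebesgue measure zero. -/
import Mathlib


open MeasureTheory

/-- A line `{p | a p₁ + b p₂ = d}` with `(a,b) ≠ (0,0)` has measure zero in `ℝ²`. -/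
lemma line_volume_zero (a b d : ℝ) (h : (a, b) ≠ (0, 0)) :
    volume {p : ℝ × ℝ | a * p.1 + b * p.2 = d} = 0 := by
  set f : (ℝ × ℝ) →ₗ[ℝ] ℝ :=
    a • (LinearMap.fst ℝ ℝ ℝ) + b • (LinearMap.snd ℝ ℝ ℝ) with hf
  have hfapp : ∀ p : ℝ × ℝ, f p = a * p.1 + b * p.2 := by
    intro p; simp [hf, smul_eq_mul]
  have hker : LinearMap.ker f ≠ ⊤ := by
    intro htop
    have h1 : f (1, 0) = 0 := by
      have : (1, 0) ∈ LinearMap.ker f := htop ▸ Submodule.mem_top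
      simpa using this
    have h2 : f (0, 1) = 0 := by
      have : (0, 1) ∈ LinearMap.ker f := htop ▸ Submodule.mem_top
      simpa using this
    rw [hfapp] at h1 h2
    simp at h1 h2
    exact h (by simp [h1, h2, Prod.ext_iff])
  by_cases hne : ∃ p₀ : ℝ × ℝ, a * p₀.1 + b * p₀.2 = d
  · obtain ⟨p₀, hp₀⟩ := hne
    set s : AffineSubspace ℝ (ℝ × ℝ) := AffineSubspace.mk' p₀ (LinearMap.ker f) with hs
    have hcar : {p : ℝ × ℝ | a * p.1 + b * p.2 = d} = (s : Set (ℝ × ℝ)) := by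
      ext p
      simp only [hs, AffineSubspace.mem_coe, AffineSubspace.mem_mk',
        LinearMap.mem_ker, vsub_eq_sub, map_sub, hfapp, Set.mem_setOf_eq, Prod.fst_sub, Prod.snd_sub]
      constructor
      · intro hp; nlinarith [hp, hp₀]
      · intro hp; nlinarith [hp, hp₀]
    rw [hcar]
    apply Measure.addHaar_affineSubspace
    intro htop
    apply hker
    have := AffineSubspace.direction_mk' p₀ (LinearMap.ker f)
    rw [← hs, htop] at this
    rw [← this, AffineSubspace.direction_top]
  · have : {p : ℝ × ℝ | a * p.1 + b * p.2 = d} = ∅ := by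
      ext p; simp only [Set.mem_setOf_eq, Set.mem_empty_iff_false, iff_false]
      exact fun hp => hne ⟨p, hp⟩
    rw [this, measure_empty]

/-- Lemma 2.1: the set of exceptional directions `(α₁, α₂)` taking some point of a
Z-face splitting edge (in the plane `z = m₁` on the line `c₁x + c₂y = c₃`) back to the
edge or to an analogous integer-translated edge has two-dimensional measure zero. -/
theorem exceptional_directions_measure_zero
    (c₁ c₂ c₃ : ℝ) (hc : (c₁, c₂) ≠ (0, 0)) (m₁ : ℤ) :
    volume {p : ℝ × ℝ | ∃ x₁ y₁ t : ℝ, 0 < t ∧ ∃ m₂ n₂ q₂ : ℤ,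
      c₁ * x₁ + c₂ * y₁ = c₃ ∧ (m₁ : ℝ) + t = (m₂ : ℝ) ∧
      c₁ * (x₁ + t * p.1 - (n₂ : ℝ)) + c₂ * (y₁ + t * p.2 - (q₂ : ℝ)) = c₃} = 0 := by
  refine measure_mono_null (t := ⋃ k : ℤ × ℤ × ℤ,
    {p : ℝ × ℝ | c₁ * p.1 + c₂ * p.2 = (c₁ * k.2.1 + c₂ * k.2.2) / ((k.1 : ℝ) - m₁)}) ?_ ?_
  · rintro p ⟨x₁, y₁, t, ht, m₂, n₂, q₂, h1, h2, h3⟩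
    refine Set.mem_iUnion.2 ⟨(m₂, n₂, q₂), ?_⟩
    have hteq : t = (m₂ : ℝ) - m₁ := by linarith
    have key : t * (c₁ * p.1 + c₂ * p.2) = c₁ * n₂ + c₂ * q₂ := by nlinarith [h1, h3]
    have htne : t ≠ 0 := ne_of_gt ht
    simp only [Set.mem_setOf_eq, ← hteq]
    field_simp
    linarith [key]
  · exact measure_iUnion_null fun k => line_volume_zero c₁ c₂ _ hc
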